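/- Suppose that A consists of a single element. Then a filtered model structure (A, C, W, F) on a category 𝒞 indexed by A is the same as an ordinary model structure on 𝒞: the classes C, W, F of such a filtered model structure form a model structure on 𝒞 with cofibrations C, weak equivalences W and fibrations F, and conversely the three classes of any model structure on 𝒞 satisfy the axioms of a filtered model structure indexed by a one-element set. Moreover, proper filtered model structures correspond to proper model structures under this identification. -/

import Mathlib

open CategoryTheory CategoryTheory.Limits Opposite

universe v u

namespace ProPaper

variable (C : Type u) [Category.{v} C]

/-- A pro-object: a diagram indexed by a small cofiltered category. -/
structure ProObj : Type (max u (v + 1)) where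
  I : Type v
  [instCat : SmallCategory I]
  [instCof : IsCofiltered I]
  diag : I ⥤ C

attribute [instance] ProObj.instCat ProObj.instCof

variable {C}

def ProObj.of (I : Type v) [SmallCategory I] [IsCofiltered I] (D : I ⥤ C) : ProObj C :=
  ⟨I, D⟩

/-- The functor `C ⥤ Type` corepresented by a pro-object:
`X ↦ colim_t Hom(X_t, -)`. -/
noncomputable def ProObj.hat (X : ProObj C) : C ⥤ Type v :=
  colimit (X.diag.op ⋙ coyoneda)

/-- The pro-category: `Hom(X, Y) = lim_s colim_t Hom(X_t, Y_s)`, encoded as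
natural transformations `hat Y ⟶ hat X`. -/
noncomputable instance : Category (ProObj C) where
  Hom X Y := Opposite.op X.hat ⟶ Opposite.op Y.hat
  id X := 𝟙 (Opposite.op X.hat)
  comp f g := f ≫ g
  id_comp f := Category.id_comp f
  comp_id f := Category.comp_id f
  assoc f g h := Category.assoc f g h

/-- The pro-map induced by a level map (a natural transformation of diagrams). -/
noncomputable def levelHom {I : Type v} [SmallCategory I] [IsCofiltered I]
    {Xd Yd : I ⥤ C} (η : Xd ⟶ Yd) :
    (ProObj.of I Xd : ProObj C) ⟶ ProObj.of I Yd :=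
  Quiver.Hom.op
    (colimMap (G := Yd.op ⋙ coyoneda) (F := Xd.op ⋙ coyoneda)
      (Functor.whiskerRight (NatTrans.op η) coyoneda) :
      (ProObj.of I Yd : ProObj C).hat ⟶ (ProObj.of I Xd : ProObj C).hat)

/-- A level map of pro-objects, bundled. -/
structure LevelMap : Type (max u (v + 1)) where
  I : Type v
  [instCat : SmallCategory I]
  [instCof : IsCofiltered I]
  {Xd Yd : I ⥤ C}
  η : Xd ⟶ Yd

attribute [instance] LevelMap.instCat LevelMap.instCof

noncomputable def LevelMap.hom (ℓ : LevelMap (C := C)) :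
    (ProObj.of ℓ.I ℓ.Xd : ProObj C) ⟶ ProObj.of ℓ.I ℓ.Yd :=
  levelHom ℓ.η

/-- `f` is an essentially levelwise `M`-map. -/
def essLevelwise (M : MorphismProperty C) {X Y : ProObj C} (f : X ⟶ Y) : Prop :=
  ∃ ℓ : LevelMap (C := C), (∀ i : ℓ.I, M (ℓ.η.app i)) ∧
    Nonempty (Arrow.mk f ≅ Arrow.mk ℓ.hom)

/-- An object of pro-C belongs to a class `P` of objects essentially levelwise. -/
def essLevelwiseObj (P : C → Prop) (X : ProObj C) : Prop :=
  ∃ Y : ProObj C, (∀ i : Y.I, P (Y.diag.obj i)) ∧ Nonempty (X ≅ Y)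


/-- `f` is a retract of `g` (in the arrow category). -/
def IsRetractHom {D : Type*} [Category D] {X Y X' Y' : D}
    (f : X ⟶ Y) (g : X' ⟶ Y') : Prop :=
  ∃ (i : X ⟶ X') (r : X' ⟶ X) (i' : Y ⟶ Y') (r' : Y' ⟶ Y),
    i ≫ r = 𝟙 X ∧ i' ≫ r' = 𝟙 Y ∧ i ≫ g = f ≫ i' ∧ r ≫ f = g ≫ r'

/-- An object `X` is a retract of `Y`. -/
def IsRetractObj {D : Type*} [Category D] (X Y : D) : Prop :=
  ∃ (i : X ⟶ Y) (r : Y ⟶ X), i ≫ r = 𝟙 X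

/-- `inj-M`: the maps with the right lifting property with respect to `M`. -/
def injP {D : Type*} [Category D] (M : MorphismProperty D) : MorphismProperty D :=
  fun _ _ p => ∀ ⦃A B : D⦄ (i : A ⟶ B), M i → HasLiftingProperty i p

/-- `proj-M`: the maps with the left lifting property with respect to `M`. -/
def projP {D : Type*} [Category D] (M : MorphismProperty D) : MorphismProperty D :=
  fun _ _ i => ∀ ⦃A B : D⦄ (p : A ⟶ B), M p → HasLiftingProperty i p

section FMS

variable {A : Type*} [Preorder A]

/-- The axioms for a filtered model structure `(A, C, W, F)`. -/
structure IsFilteredMS (Cof W Fib : A → MorphismProperty C) : Prop where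
  cof_anti : ∀ ⦃a b : A⦄, a ≤ b → Cof b ≤ Cof a
  weq_anti : ∀ ⦃a b : A⦄, a ≤ b → W b ≤ W a
  fib_mono : ∀ ⦃a b : A⦄, a ≤ b → Fib a ≤ Fib b
  /-- Axiom 4.2: up-to-refinement two-out-of-three. -/
  two_out_of_three : ∀ a : A, ∃ b : A,
    (∀ ⦃X Y Z : C⦄ (f : X ⟶ Y) (g : Y ⟶ Z), W b f → W b g → W a (f ≫ g)) ∧
    (∀ ⦃X Y Z : C⦄ (f : X ⟶ Y) (g : Y ⟶ Z), W b f → W b (f ≫ g) → W a g) ∧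
    (∀ ⦃X Y Z : C⦄ (f : X ⟶ Y) (g : Y ⟶ Z), W b g → W b (f ≫ g) → W a f)
  /-- Axiom 4.3: closure properties. -/
  weq_retract : ∀ (a : A) ⦃X Y X' Y' : C⦄ (f : X ⟶ Y) (g : X' ⟶ Y'),
    IsRetractHom f g → W a g → W a f
  cof_retract : ∀ (a : A) ⦃X Y X' Y' : C⦄ (f : X ⟶ Y) (g : X' ⟶ Y'),
    IsRetractHom f g → Cof a g → Cof a f
  fib_retract : ∀ (a : A) ⦃X Y X' Y' : C⦄ (f : X ⟶ Y) (g : X' ⟶ Y'),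
    IsRetractHom f g → Fib a g → Fib a f
  cof_comp : ∀ (a : A) ⦃X Y Z : C⦄ (f : X ⟶ Y) (g : Y ⟶ Z),
    Cof a f → Cof a g → Cof a (f ≫ g)
  fib_comp : ∀ (a : A) ⦃X Y Z : C⦄ (f : X ⟶ Y) (g : Y ⟶ Z),
    Fib a f → Fib a g → Fib a (f ≫ g)
  cof_cobase : ∀ (a : A) ⦃Z X Y P : C⦄ (f : Z ⟶ X) (g : Z ⟶ Y) (h : X ⟶ P) (k : Y ⟶ P),
    IsPushout f g h k → Cof a f → Cof a k
  fib_base : ∀ (a : A) ⦃P X Y Z : C⦄ (h : P ⟶ X) (k : P ⟶ Y) (f : X ⟶ Z) (g : Y ⟶ Z),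
    IsPullback h k f g → Fib a f → Fib a k
  /-- Axiom 4.4: `inj-C_a ⊆ W_a ∩ F_a` and `proj-F_a ⊆ W_a ∩ C_a`. -/
  injC_le : ∀ a : A, injP (Cof a) ≤ W a ⊓ Fib a
  projF_le : ∀ a : A, projP (Fib a) ≤ W a ⊓ Cof a
  /-- Axiom 4.5: factorizations. -/
  fact_cof : ∀ (a : A) ⦃X Y : C⦄ (f : X ⟶ Y),
    ∃ (Z : C) (i : X ⟶ Z) (p : Z ⟶ Y), Cof a i ∧ injP (Cof a) p ∧ i ≫ p = f
  fact_fib : ∀ (a : A) ⦃X Y : C⦄ (f : X ⟶ Y),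
    ∃ (Z : C) (j : X ⟶ Z) (q : Z ⟶ Y), projP (Fib a) j ∧ Fib a q ∧ j ≫ q = f
  /-- Axiom 4.6: factorization of weak equivalences. -/
  weq_fact : ∀ (a : A) ⦃X Y : C⦄ (f : X ⟶ Y), W a f → ∃ b : A, a ≤ b ∧
    ∃ (Z : C) (i : X ⟶ Z) (p : Z ⟶ Y), projP (Fib b) i ∧ injP (Cof b) p ∧ i ≫ p = f

/-- A proper filtered model structure: Axioms 4.9 and 4.10 in addition. -/
structure IsProperFilteredMS (Cof W Fib : A → MorphismProperty C)
    extends IsFilteredMS Cof W Fib : Prop where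
  weq_cobase : ∀ (a : A) ⦃Z X Y P : C⦄ (f : Z ⟶ X) (g : Z ⟶ Y) (h : X ⟶ P) (k : Y ⟶ P),
    IsPushout f g h k → Cof a f → W a g → W a h
  weq_base : ∀ (a : A) ⦃P X Y Z : C⦄ (h : P ⟶ X) (k : P ⟶ Y) (f : X ⟶ Z) (g : Y ⟶ Z),
    IsPullback h k f g → (∃ b : A, Fib b f) → W a g → W a h

/-- The union `F = ∪ₐ Fₐ`. -/
def unionProp (F : A → MorphismProperty C) : MorphismProperty C :=
  fun _ _ f => ∃ a : A, F a f

/-- The union `inj-C = ∪ₐ inj-Cₐ`. -/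
def injCUnion (Cof : A → MorphismProperty C) : MorphismProperty C :=
  fun _ _ f => ∃ a : A, injP (Cof a) f

end FMS


/-- A pro-object indexed by a (nonempty, upward) directed set `I`;
the diagram is contravariant, i.e. for `s ≤ t` there is a structure map
`X_t ⟶ X_s`. -/
structure DirProObj : Type (max u (v + 1)) where
  I : Type v
  [instPre : Preorder I]
  [instDir : IsDirected I (· ≤ ·)]
  [instNe : Nonempty I]
  diag : Iᵒᵖ ⥤ C

attribute [instance] DirProObj.instPre DirProObj.instDir DirProObj.instNe

/-- The pro-object underlying a directed-set-indexed pro-object. -/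
def DirProObj.pro (X : DirProObj (C := C)) : ProObj C :=
  ProObj.of (X.I)ᵒᵖ X.diag

/-- A level map indexed by a cofinite directed set. -/
structure CofDirLevelMap : Type (max u (v + 1)) where
  I : Type v
  [instPre : Preorder I]
  [instDir : IsDirected I (· ≤ ·)]
  [instNe : Nonempty I]
  cofinite : ∀ t : I, {s : I | s ≤ t}.Finite
  {Xd Yd : Iᵒᵖ ⥤ C}
  η : Xd ⟶ Yd

attribute [instance] CofDirLevelMap.instPre CofDirLevelMap.instDir CofDirLevelMap.instNe

noncomputable def CofDirLevelMap.hom (ℓ : CofDirLevelMap (C := C)) :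
    (ProObj.of (ℓ.I)ᵒᵖ ℓ.Xd : ProObj C) ⟶ ProObj.of (ℓ.I)ᵒᵖ ℓ.Yd :=
  levelHom ℓ.η

section Matching

variable [HasLimits C]

namespace CofDirLevelMap

variable (ℓ : CofDirLevelMap (C := C))

/-- The set of indices strictly below `t`. -/
abbrev Below (t : ℓ.I) : Type v := {s : ℓ.I // s < t}

instance (t : ℓ.I) : Preorder (ℓ.Below t) :=
  Subtype.preorder _

/-- The inclusion of the indices strictly below `t`. -/
def belowIncl (t : ℓ.I) : ℓ.Below t ⥤ ℓ.I :=
  Monotone.functor (f := fun s => s.1) (fun _ _ h => h)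

/-- `lim_{s < t} D_s`. -/
noncomputable def limBelow (D : (ℓ.I)ᵒᵖ ⥤ C) (t : ℓ.I) : C :=
  limit ((ℓ.belowIncl t).op ⋙ D)

/-- The cone over the diagram strictly below `t` with apex `D_t`. -/
noncomputable def belowCone (D : (ℓ.I)ᵒᵖ ⥤ C) (t : ℓ.I) :
    Cone ((ℓ.belowIncl t).op ⋙ D) where
  pt := D.obj (op t)
  π :=
    { app := fun s => D.map (Quiver.Hom.op (homOfLE (le_of_lt s.unop.2)))
      naturality := fun s s' g => by
        dsimp
        rw [Category.id_comp, ← D.map_comp]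
        rfl }

/-- The canonical map `D_t ⟶ lim_{s < t} D_s`. -/
noncomputable def toLimBelow (D : (ℓ.I)ᵒᵖ ⥤ C) (t : ℓ.I) :
    D.obj (op t) ⟶ ℓ.limBelow D t :=
  limit.lift _ (ℓ.belowCone D t)

/-- The target of the relative matching map:
`lim_{s<t} X_s ×_{lim_{s<t} Y_s} Y_t`. -/
noncomputable def matchObj (t : ℓ.I) : C :=
  pullback (limMap (Functor.whiskerLeft (ℓ.belowIncl t).op ℓ.η)) (ℓ.toLimBelow ℓ.Yd t)

/-- The relative matching map `M_t f : X_t ⟶ lim_{s<t} X_s ×_{lim_{s<t} Y_s} Y_t`. -/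
noncomputable def matchingMap (t : ℓ.I) : ℓ.Xd.obj (op t) ⟶ ℓ.matchObj t :=
  pullback.lift (ℓ.toLimBelow ℓ.Xd t) (ℓ.η.app (op t)) (by
    apply limit.hom_ext
    intro j
    simp only [toLimBelow, Category.assoc, limMap_π, limit.lift_π, limit.lift_π_assoc,
      Functor.whiskerLeft_app, belowCone]
    exact ℓ.η.naturality _)

end CofDirLevelMap

/-- `f` is a special `M`-map: it is isomorphic to a cofinite directed level map
all of whose relative matching maps belong to `M`. -/
def specialMap (M : MorphismProperty C) {X Y : ProObj C} (f : X ⟶ Y) : Prop :=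
  ∃ ℓ : CofDirLevelMap (C := C), (∀ t : ℓ.I, M (ℓ.matchingMap t)) ∧
    Nonempty (Arrow.mk f ≅ Arrow.mk ℓ.hom)

end Matching

section ProClasses

variable {A : Type*} [Preorder A]

/-- Cofibrations in `pro-C`: essentially levelwise `C_a`-maps for every `a`. -/
def proCof (Cof : A → MorphismProperty C) : MorphismProperty (ProObj C) :=
  fun _ _ f => ∀ a : A, essLevelwise (Cof a) f

/-- Weak equivalences in `pro-C`: essentially levelwise `W_a`-maps for every `a`. -/
def proWeq (W : A → MorphismProperty C) : MorphismProperty (ProObj C) :=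
  fun _ _ f => ∀ a : A, essLevelwise (W a) f

/-- Fibrations in `pro-C`: retracts of special `F`-maps, `F = ∪ₐ Fₐ`. -/
def proFib [HasLimits C] (Fib : A → MorphismProperty C) : MorphismProperty (ProObj C) :=
  fun _ _ f => ∃ (X' Y' : ProObj C) (g : X' ⟶ Y'),
    specialMap (unionProp Fib) g ∧ IsRetractHom f g

end ProClasses

section ModelStructure

variable {D : Type*} [Category D]

/-- The classes `(Cof, W, Fib)` form a model structure on `D`. -/
structure IsModelStructure (Cof W Fib : MorphismProperty D) : Prop where
  weq_comp : ∀ ⦃X Y Z : D⦄ (f : X ⟶ Y) (g : Y ⟶ Z), W f → W g → W (f ≫ g)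
  weq_cancel_left : ∀ ⦃X Y Z : D⦄ (f : X ⟶ Y) (g : Y ⟶ Z), W f → W (f ≫ g) → W g
  weq_cancel_right : ∀ ⦃X Y Z : D⦄ (f : X ⟶ Y) (g : Y ⟶ Z), W g → W (f ≫ g) → W f
  weq_retract : ∀ ⦃X Y X' Y' : D⦄ (f : X ⟶ Y) (g : X' ⟶ Y'),
    IsRetractHom f g → W g → W f
  cof_retract : ∀ ⦃X Y X' Y' : D⦄ (f : X ⟶ Y) (g : X' ⟶ Y'),
    IsRetractHom f g → Cof g → Cof f
  fib_retract : ∀ ⦃X Y X' Y' : D⦄ (f : X ⟶ Y) (g : X' ⟶ Y'),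
    IsRetractHom f g → Fib g → Fib f
  lift_acyclicCof_fib : ∀ ⦃A B X Y : D⦄ (i : A ⟶ B) (p : X ⟶ Y),
    Cof i → W i → Fib p → HasLiftingProperty i p
  lift_cof_acyclicFib : ∀ ⦃A B X Y : D⦄ (i : A ⟶ B) (p : X ⟶ Y),
    Cof i → Fib p → W p → HasLiftingProperty i p
  fact_acyclicCof_fib : ∀ ⦃X Y : D⦄ (f : X ⟶ Y),
    ∃ (Z : D) (i : X ⟶ Z) (p : Z ⟶ Y), Cof i ∧ W i ∧ Fib p ∧ i ≫ p = f
  fact_cof_acyclicFib : ∀ ⦃X Y : D⦄ (f : X ⟶ Y),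
    ∃ (Z : D) (i : X ⟶ Z) (p : Z ⟶ Y), Cof i ∧ Fib p ∧ W p ∧ i ≫ p = f

/-- The classes `(Cof, W, Fib)` form a proper model structure on `D`. -/
structure IsProperModelStructure (Cof W Fib : MorphismProperty D)
    extends IsModelStructure Cof W Fib : Prop where
  weq_cobase : ∀ ⦃Z X Y P : D⦄ (f : Z ⟶ X) (g : Z ⟶ Y) (h : X ⟶ P) (k : Y ⟶ P),
    IsPushout f g h k → Cof f → W g → W h
  weq_base : ∀ ⦃P X Y Z : D⦄ (h : P ⟶ X) (k : P ⟶ Y) (f : X ⟶ Z) (g : Y ⟶ Z),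
    IsPullback h k f g → Fib f → W g → W h

end ModelStructure

section Constants

/-- The constant pro-object on an object of `C`. -/
def proConst (X : C) : ProObj C :=
  ProObj.of (Discrete PUnit.{v + 1}) ((Functor.const _).obj X)

/-- The constant pro-map on a morphism of `C`. -/
noncomputable def proConstHom {X Y : C} (f : X ⟶ Y) : proConst X ⟶ proConst Y :=
  levelHom ((Functor.const (Discrete PUnit.{v + 1})).map f)

end Constants

section Induced

variable {C' : Type u} [Category.{v} C']

/-- The levelwise action of a functor on pro-objects. -/
def ProObj.map (G : C ⥤ C') (X : ProObj C) : ProObj C' :=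
  ProObj.of X.I (X.diag ⋙ G)

/-- The levelwise action of a functor on level maps. -/
def LevelMap.map (G : C ⥤ C') (ℓ : LevelMap (C := C)) : LevelMap (C := C') :=
  { I := ℓ.I, η := Functor.whiskerRight ℓ.η G }

/-- `Gp : pro-C ⥤ pro-C'` is the functor induced by `G : C ⥤ C'`:
it acts levelwise on pro-objects and on level maps. -/
def IsProInduced (G : C ⥤ C') (Gp : ProObj C ⥤ ProObj C') : Prop :=
  (∀ X : ProObj C, Gp.obj X = ProObj.map G X) ∧
  (∀ ℓ : LevelMap (C := C),
    Nonempty (Arrow.mk (Gp.map ℓ.hom) ≅ Arrow.mk (LevelMap.hom (ℓ.map G))))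

end Induced


section StatementFiveHelpers

variable {D : Type*} [Category D]

/-- Left lifting property is closed under retracts. -/
lemma hlp_retract_left {X Y X' Y' E B : D} {i : X ⟶ Y} {j : X' ⟶ Y'} {p : E ⟶ B}
    (h : IsRetractHom i j) (hp : HasLiftingProperty j p) : HasLiftingProperty i p := by
  obtain ⟨s, r, s', r', hsr, hsr', hc1, hc2⟩ := h
  constructor
  intro f g sq
  have sq' : CommSq (r ≫ f) j p (r' ≫ g) := ⟨by
    rw [Category.assoc, sq.w, ← Category.assoc, hc2, Category.assoc]⟩
  exact ⟨⟨⟨s' ≫ sq'.lift,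
    by rw [← Category.assoc, ← hc1, Category.assoc, sq'.fac_left, ← Category.assoc,
      hsr, Category.id_comp],
    by rw [Category.assoc, sq'.fac_right, ← Category.assoc, hsr', Category.id_comp]⟩⟩⟩

/-- Right lifting property is closed under retracts. -/
lemma hlp_retract_right {X Y X' Y' A' B' : D} {p : X ⟶ Y} {q : X' ⟶ Y'} {i : A' ⟶ B'}
    (h : IsRetractHom p q) (hp : HasLiftingProperty i q) : HasLiftingProperty i p := by
  obtain ⟨s, r, s', r', hsr, hsr', hc1, hc2⟩ := h
  constructor
  intro f g sq
  have sq' : CommSq (f ≫ s) i q (g ≫ s') := ⟨by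
    rw [Category.assoc, hc1, ← Category.assoc, sq.w, Category.assoc]⟩
  exact ⟨⟨⟨sq'.lift ≫ r,
    by rw [← Category.assoc, sq'.fac_left, Category.assoc, hsr, Category.comp_id],
    by rw [Category.assoc, hc2, ← Category.assoc, sq'.fac_right, Category.assoc,
      hsr', Category.comp_id]⟩⟩⟩

/-- Left lifting property is closed under cobase change. -/
lemma hlp_pushout {Z X Y P E B : D} {f : Z ⟶ X} {g : Z ⟶ Y} {h : X ⟶ P} {k : Y ⟶ P}
    (po : IsPushout f g h k) {p : E ⟶ B}
    (hf : HasLiftingProperty f p) : HasLiftingProperty k p := by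
  constructor
  intro u v sq
  have sq' : CommSq (g ≫ u) f p (h ≫ v) := ⟨by
    rw [Category.assoc, sq.w, ← Category.assoc, ← po.w, Category.assoc]⟩
  refine ⟨⟨⟨po.desc sq'.lift u sq'.fac_left, po.inr_desc _ _ _, ?_⟩⟩⟩
  apply po.hom_ext
  · rw [← Category.assoc, po.inl_desc, sq'.fac_right]
  · rw [← Category.assoc, po.inr_desc, sq.w]

/-- Right lifting property is closed under base change. -/
lemma hlp_pullback {P X Y Z A' B' : D} {h : P ⟶ X} {k : P ⟶ Y} {f : X ⟶ Z} {g : Y ⟶ Z}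
    (pb : IsPullback h k f g) {i : A' ⟶ B'}
    (hf : HasLiftingProperty i f) : HasLiftingProperty i k := by
  constructor
  intro u v sq
  have sq' : CommSq (u ≫ h) i f (v ≫ g) := ⟨by
    rw [Category.assoc, pb.w, ← Category.assoc, sq.w, Category.assoc]⟩
  refine ⟨⟨⟨pb.lift sq'.lift v sq'.fac_right, ?_, pb.lift_snd _ _ _⟩⟩⟩
  apply pb.hom_ext
  · rw [Category.assoc, pb.lift_fst, sq'.fac_left]
  · rw [Category.assoc, pb.lift_snd, sq.w]

/-- Left lifting property is closed under composition. -/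
lemma hlp_comp {X Y Z E B : D} {i : X ⟶ Y} {j : Y ⟶ Z} {p : E ⟶ B}
    (hi : HasLiftingProperty i p) (hj : HasLiftingProperty j p) :
    HasLiftingProperty (i ≫ j) p := by
  constructor
  intro u v sq
  have sq1 : CommSq u i p (j ≫ v) := ⟨by rw [sq.w, Category.assoc]⟩
  have sq2 : CommSq sq1.lift j p v := ⟨by rw [sq1.fac_right]⟩
  exact ⟨⟨⟨sq2.lift, by rw [Category.assoc, sq2.fac_left, sq1.fac_left], sq2.fac_right⟩⟩⟩

/-- Right lifting property is closed under composition. -/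
lemma hlp_comp_right {X Y Z A' B' : D} {p : X ⟶ Y} {q : Y ⟶ Z} {i : A' ⟶ B'}
    (hp : HasLiftingProperty i p) (hq : HasLiftingProperty i q) :
    HasLiftingProperty i (p ≫ q) := by
  constructor
  intro u v sq
  have sq1 : CommSq (u ≫ p) i q v := ⟨by rw [Category.assoc, sq.w]⟩
  have sq2 : CommSq u i p sq1.lift := ⟨by rw [sq1.fac_left]⟩
  exact ⟨⟨⟨sq2.lift, sq2.fac_left,
    by rw [← Category.assoc, sq2.fac_right, sq1.fac_right]⟩⟩⟩

variable {Cof W Fib : MorphismProperty D}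

/-- Characterization of cofibrations by the left lifting property. -/
lemma cof_of_llp (M : IsModelStructure Cof W Fib) {X Y : D} {f : X ⟶ Y}
    (hf : ∀ ⦃E B : D⦄ (p : E ⟶ B), Fib p → W p → HasLiftingProperty f p) : Cof f := by
  obtain ⟨Z, i, p, hi, hp, hwp, hip⟩ := M.fact_cof_acyclicFib f
  have hl : HasLiftingProperty f p := hf p hp hwp
  have sq : CommSq i f p (𝟙 Y) := ⟨by rw [hip, Category.comp_id]⟩
  refine M.cof_retract f i ⟨𝟙 X, 𝟙 X, sq.lift, p, Category.id_comp _, sq.fac_right,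
    by rw [Category.id_comp, sq.fac_left], by rw [Category.id_comp, hip]⟩ hi

/-- Characterization of fibrations by the right lifting property. -/
lemma fib_of_rlp (M : IsModelStructure Cof W Fib) {X Y : D} {p : X ⟶ Y}
    (hp : ∀ ⦃E B : D⦄ (i : E ⟶ B), Cof i → W i → HasLiftingProperty i p) : Fib p := by
  obtain ⟨Z, j, q, hj, hwj, hq, hjq⟩ := M.fact_acyclicCof_fib p
  have hl : HasLiftingProperty j p := hp j hj hwj
  have sq : CommSq (𝟙 X) j p q := ⟨by rw [Category.id_comp, hjq]⟩
  refine M.fib_retract p q ⟨j, sq.lift, 𝟙 Y, 𝟙 Y, sq.fac_left, Category.id_comp _,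
    by rw [hjq, Category.comp_id], by rw [sq.fac_right, Category.comp_id]⟩ hq

end StatementFiveHelpers

/-- Proposition 4.13 of the paper. If `A` consists of a
single element, then a (proper) filtered model structure indexed by `A` is the
same thing as an ordinary (proper) model structure. -/
theorem statement_5 {𝒞 : Type u} [Category.{v} 𝒞] [HasLimits 𝒞] [HasColimits 𝒞]
    {A : Type*} [Preorder A] [IsDirected A (· ≤ ·)] [Subsingleton A]
    (Cof W Fib : A → MorphismProperty 𝒞) (a : A) :
    (IsFilteredMS Cof W Fib ↔ IsModelStructure (Cof a) (W a) (Fib a)) ∧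
    (IsProperFilteredMS Cof W Fib ↔ IsProperModelStructure (Cof a) (W a) (Fib a)) := by
  have main : IsFilteredMS Cof W Fib ↔ IsModelStructure (Cof a) (W a) (Fib a) := by
    constructor
    · intro F
      obtain ⟨b, h1, h2, h3⟩ := F.two_out_of_three a
      rw [Subsingleton.elim b a] at h1 h2 h3
      have lift_acf : ∀ ⦃X Y E B : 𝒞⦄ (i : X ⟶ Y) (p : E ⟶ B),
          Cof a i → W a i → Fib a p → HasLiftingProperty i p := by
        intro X Y E B i p hci hwi hfp
        obtain ⟨c, _, Z, j, q, hj, hq, hjq⟩ := F.weq_fact a i hwi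
        rw [Subsingleton.elim c a] at hj hq
        have hiq : HasLiftingProperty i q := hq i hci
        have sq : CommSq j i q (𝟙 Y) := ⟨by rw [hjq, Category.comp_id]⟩
        have hretr : IsRetractHom i j := ⟨𝟙 X, 𝟙 X, sq.lift, q, Category.id_comp _,
          sq.fac_right, by rw [Category.id_comp, sq.fac_left],
          by rw [Category.id_comp, hjq]⟩
        exact hlp_retract_left hretr (hj p hfp)
      have lift_cfa : ∀ ⦃X Y E B : 𝒞⦄ (i : X ⟶ Y) (p : E ⟶ B),
          Cof a i → Fib a p → W a p → HasLiftingProperty i p := by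
        intro X Y E B i p hci hfp hwp
        obtain ⟨c, _, Z, j, q, hj, hq, hjq⟩ := F.weq_fact a p hwp
        rw [Subsingleton.elim c a] at hj hq
        have hjp : HasLiftingProperty j p := hj p hfp
        have sq : CommSq (𝟙 E) j p q := ⟨by rw [Category.id_comp, hjq]⟩
        have hretr : IsRetractHom p q := ⟨j, sq.lift, 𝟙 B, 𝟙 B, sq.fac_left,
          Category.id_comp _, by rw [hjq, Category.comp_id],
          by rw [sq.fac_right, Category.comp_id]⟩
        exact hlp_retract_right hretr (hq i hci)
      refine
        { weq_comp := h1
          weq_cancel_left := h2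
          weq_cancel_right := h3
          weq_retract := F.weq_retract a
          cof_retract := F.cof_retract a
          fib_retract := F.fib_retract a
          lift_acyclicCof_fib := lift_acf
          lift_cof_acyclicFib := lift_cfa
          fact_acyclicCof_fib := ?_
          fact_cof_acyclicFib := ?_ }
      · intro X Y f
        obtain ⟨Z, j, q, hj, hq, hjq⟩ := F.fact_fib a f
        have h := F.projF_le a _ hj
        exact ⟨Z, j, q, h.2, h.1, hq, hjq⟩
      · intro X Y f
        obtain ⟨Z, i, p, hi, hp, hip⟩ := F.fact_cof a f
        have h := F.injC_le a _ hp
        exact ⟨Z, i, p, hi, h.2, h.1, hip⟩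
    · intro M
      refine
        { cof_anti := fun b c _ => le_of_eq (congrArg Cof (Subsingleton.elim c b))
          weq_anti := fun b c _ => le_of_eq (congrArg W (Subsingleton.elim c b))
          fib_mono := fun b c _ => le_of_eq (congrArg Fib (Subsingleton.elim b c))
          two_out_of_three := fun b => by
            rw [Subsingleton.elim b a]
            exact ⟨a, M.weq_comp, M.weq_cancel_left, M.weq_cancel_right⟩
          weq_retract := fun b => by
            rw [Subsingleton.elim b a]; exact M.weq_retract
          cof_retract := fun b => by
            rw [Subsingleton.elim b a]; exact M.cof_retract
          fib_retract := fun b => by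
            rw [Subsingleton.elim b a]; exact M.fib_retract
          cof_comp := fun b => by
            rw [Subsingleton.elim b a]
            intro X Y Z f g hf hg
            refine cof_of_llp M (fun E B p hp hwp => ?_)
            exact hlp_comp (M.lift_cof_acyclicFib f p hf hp hwp)
              (M.lift_cof_acyclicFib g p hg hp hwp)
          fib_comp := fun b => by
            rw [Subsingleton.elim b a]
            intro X Y Z f g hf hg
            refine fib_of_rlp M (fun E B i hi hwi => ?_)
            exact hlp_comp_right (M.lift_acyclicCof_fib i f hi hwi hf)
              (M.lift_acyclicCof_fib i g hi hwi hg)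
          cof_cobase := fun b => by
            rw [Subsingleton.elim b a]
            intro Z X Y P f g h k po hf
            refine cof_of_llp M (fun E B p hp hwp => ?_)
            exact hlp_pushout po (M.lift_cof_acyclicFib f p hf hp hwp)
          fib_base := fun b => by
            rw [Subsingleton.elim b a]
            intro P X Y Z h k f g pb hf
            refine fib_of_rlp M (fun E B i hi hwi => ?_)
            exact hlp_pullback pb (M.lift_acyclicCof_fib i f hi hwi hf)
          injC_le := fun b => by
            rw [Subsingleton.elim b a]
            intro X Y p hp
            obtain ⟨Z, i, q, hci, hfq, hwq, hiq⟩ := M.fact_cof_acyclicFib p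
            have hl : HasLiftingProperty i p := hp i hci
            have sq : CommSq (𝟙 X) i p q := ⟨by rw [Category.id_comp, hiq]⟩
            have hretr : IsRetractHom p q := ⟨i, sq.lift, 𝟙 Y, 𝟙 Y, sq.fac_left,
              Category.id_comp _, by rw [hiq, Category.comp_id],
              by rw [sq.fac_right, Category.comp_id]⟩
            exact ⟨M.weq_retract p q hretr hwq, M.fib_retract p q hretr hfq⟩
          projF_le := fun b => by
            rw [Subsingleton.elim b a]
            intro X Y i hi
            obtain ⟨Z, j, q, hcj, hwj, hfq, hjq⟩ := M.fact_acyclicCof_fib i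
            have hl : HasLiftingProperty i q := hi q hfq
            have sq : CommSq j i q (𝟙 Y) := ⟨by rw [hjq, Category.comp_id]⟩
            have hretr : IsRetractHom i j := ⟨𝟙 X, 𝟙 X, sq.lift, q, Category.id_comp _,
              sq.fac_right, by rw [Category.id_comp, sq.fac_left],
              by rw [Category.id_comp, hjq]⟩
            exact ⟨M.weq_retract i j hretr hwj, M.cof_retract i j hretr hcj⟩
          fact_cof := fun b => by
            rw [Subsingleton.elim b a]
            intro X Y f
            obtain ⟨Z, i, p, hci, hfp, hwp, hip⟩ := M.fact_cof_acyclicFib f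
            exact ⟨Z, i, p, hci,
              fun E B i' hi' => M.lift_cof_acyclicFib i' p hi' hfp hwp, hip⟩
          fact_fib := fun b => by
            rw [Subsingleton.elim b a]
            intro X Y f
            obtain ⟨Z, j, q, hcj, hwj, hfq, hjq⟩ := M.fact_acyclicCof_fib f
            exact ⟨Z, j, q,
              fun E B p' hp' => M.lift_acyclicCof_fib j p' hcj hwj hp', hfq, hjq⟩
          weq_fact := fun b => by
            rw [Subsingleton.elim b a]
            intro X Y f hwf
            obtain ⟨Z, i, p, hci, hfp, hwp, hip⟩ := M.fact_cof_acyclicFib f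
            have hw : W a (i ≫ p) := by rw [hip]; exact hwf
            have hwi : W a i := M.weq_cancel_right i p hwp hw
            exact ⟨a, le_refl a, Z, i, p,
              fun E B p' hp' => M.lift_acyclicCof_fib i p' hci hwi hp',
              fun E B i' hi' => M.lift_cof_acyclicFib i' p hi' hfp hwp, hip⟩ }
  refine ⟨main, ?_, ?_⟩
  · intro P
    refine { toIsModelStructure := main.mp P.toIsFilteredMS
             weq_cobase := P.weq_cobase a
             weq_base := ?_ }
    intro Pt X Y Z h k f g pb hf hw
    exact P.weq_base a h k f g pb ⟨a, hf⟩ hw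
  · intro M
    refine { toIsFilteredMS := main.mpr M.toIsModelStructure
             weq_cobase := fun b => by
               rw [Subsingleton.elim b a]
               exact M.weq_cobase
             weq_base := fun b => by
               rw [Subsingleton.elim b a]
               intro P X Y Z h k f g pb hf hw
               obtain ⟨c, hc⟩ := hf
               rw [Subsingleton.elim c a] at hc
               exact M.weq_base h k f g pb hc hw }

end ProPaper
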